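/- Adding an i.i.d.-conditionally-generated coordinate preserves empirical coordination: if V(T_{A^{1:n}}, P_A) → 0 in probability, and B^{1:n} is generated from A^{1:n} via the memoryless conditional distribution P_{B|A} (i.e., Bⁱ drawn independently given Aⁱ), then for all ε' > ε, P{V(T_{A^{1:n}B^{1:n}}, P_{AB}) > ε'} → 0. -/
import Mathlib


open Finset Real Filter
open scoped Classical Topology

noncomputable section

namespace Stmt12

variable {A B : Type*} [Fintype A] [Fintype B]

/-- Empirical distribution (type) of a sequence. -/
def typeOf {X : Type*} [Fintype X] {n : ℕ} (w : Fin n → X) (x : X) : ℝ :=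
  (1 / (n : ℝ)) * ∑ i, if w i = x then (1 : ℝ) else 0

/-- Joint empirical distribution of a pair of sequences. -/
def jointTypeOf {n : ℕ} (a : Fin n → A) (b : Fin n → B) (x : A × B) : ℝ :=
  (1 / (n : ℝ)) * ∑ i, if (a i, b i) = x then (1 : ℝ) else 0

/-- Total variational distance. -/
def Vd {X : Type*} [Fintype X] (P Q : X → ℝ) : ℝ := ∑ x, |P x - Q x|

lemma sum_prod_eq {n : ℕ} (g : Fin n → B → ℝ) :
    ∑ b : Fin n → B, ∏ i, g i (b i) = ∏ i, ∑ y, g i y :=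
  (Fintype.prod_sum _).symm

lemma second_moment {n : ℕ} (w : Fin n → B → ℝ) (hw0 : ∀ i y, 0 ≤ w i y)
    (hw1 : ∀ i, ∑ y, w i y = 1) (f : Fin n → B → ℝ)
    (hmean : ∀ i, ∑ y, w i y * f i y = 0) (hbd : ∀ i y, |f i y| ≤ 1) :
    ∑ b : Fin n → B, (∏ i, w i (b i)) * (∑ i, f i (b i)) ^ 2 ≤ n := by
  have key : ∀ i j : Fin n,
      (∑ b : Fin n → B, (∏ k, w k (b k)) * (f i (b i) * f j (b j))) =
      if i = j then ∑ y, w i y * (f i y * f i y) else 0 := by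
    intro i j
    have hrw : ∀ b : Fin n → B, (∏ k, w k (b k)) * (f i (b i) * f j (b j)) =
        ∏ k, (w k (b k) * ((if i = k then f i (b k) else 1) *
          (if j = k then f j (b k) else 1))) := by
      intro b
      rw [Finset.prod_mul_distrib, Finset.prod_mul_distrib]
      rw [Finset.prod_ite_eq univ i (fun k => f i (b k)),
        Finset.prod_ite_eq univ j (fun k => f j (b k))]
      simp
    rw [Finset.sum_congr rfl fun b _ => hrw b,
      sum_prod_eq (fun k y => w k y * ((if i = k then f i y else 1) * if j = k then f j y else 1))]
    by_cases hij : i = j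
    · subst hij
      simp only [if_pos rfl]
      have : ∀ k : Fin n, (∑ y, w k y * ((if i = k then f i y else 1) *
          (if i = k then f i y else 1))) = if i = k then ∑ y, w i y * (f i y * f i y) else 1 := by
        intro k
        by_cases h : i = k
        · subst h; simp
        · simp [h, hw1 k]
      rw [Finset.prod_congr rfl fun k _ => this k, Finset.prod_ite_eq univ i]
      simp
    · rw [if_neg hij]
      apply Finset.prod_eq_zero (Finset.mem_univ i)
      have : ∀ y, w i y * ((if i = i then f i y else 1) * (if j = i then f j y else 1)) =
          w i y * f i y := by
        intro y
        simp [Ne.symm hij]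
      rw [Finset.sum_congr rfl fun y _ => this y, hmean i]
  have expand : ∀ b : Fin n → B, (∏ i, w i (b i)) * (∑ i, f i (b i)) ^ 2 =
      ∑ i, ∑ j, (∏ k, w k (b k)) * (f i (b i) * f j (b j)) := by
    intro b
    rw [sq, Finset.sum_mul_sum]
    rw [Finset.mul_sum]
    refine Finset.sum_congr rfl fun i _ => ?_
    rw [Finset.mul_sum]
  calc ∑ b : Fin n → B, (∏ i, w i (b i)) * (∑ i, f i (b i)) ^ 2
      = ∑ b : Fin n → B, ∑ i, ∑ j, (∏ k, w k (b k)) * (f i (b i) * f j (b j)) :=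
        Finset.sum_congr rfl fun b _ => expand b
    _ = ∑ i, ∑ j, ∑ b : Fin n → B, (∏ k, w k (b k)) * (f i (b i) * f j (b j)) := by
        rw [Finset.sum_comm]
        refine Finset.sum_congr rfl fun i _ => Finset.sum_comm
    _ = ∑ i : Fin n, ∑ y, w i y * (f i y * f i y) := by
        refine Finset.sum_congr rfl fun i _ => ?_
        rw [Finset.sum_congr rfl fun j _ => key i j]
        simp
    _ ≤ ∑ i : Fin n, (1 : ℝ) := by
        refine Finset.sum_le_sum fun i _ => ?_
        calc ∑ y, w i y * (f i y * f i y) ≤ ∑ y, w i y * 1 := by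
              refine Finset.sum_le_sum fun y _ => ?_
              refine mul_le_mul_of_nonneg_left ?_ (hw0 i y)
              have := hbd i y
              nlinarith [abs_nonneg (f i y), le_abs_self (f i y), neg_abs_le (f i y)]
          _ = 1 := by simp [hw1 i]
    _ = n := by simp


lemma cheb {n : ℕ} (hn : 1 ≤ n) (w : Fin n → B → ℝ) (hw0 : ∀ i y, 0 ≤ w i y)
    (hw1 : ∀ i, ∑ y, w i y = 1) (f : Fin n → B → ℝ)
    (hmean : ∀ i, ∑ y, w i y * f i y = 0) (hbd : ∀ i y, |f i y| ≤ 1)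
    (t : ℝ) (ht : 0 < t) :
    ∑ b : Fin n → B, (if t < |(1 / (n : ℝ)) * ∑ i, f i (b i)| then ∏ i, w i (b i) else 0)
      ≤ 1 / (n * t ^ 2) := by
  have hn0 : (0 : ℝ) < n := by exact_mod_cast hn
  have hq : ∀ b : Fin n → B, 0 ≤ ∏ i, w i (b i) := fun b =>
    Finset.prod_nonneg fun i _ => hw0 i (b i)
  have step : ∀ b : Fin n → B,
      (if t < |(1 / (n : ℝ)) * ∑ i, f i (b i)| then ∏ i, w i (b i) else 0)
        ≤ (∏ i, w i (b i)) * ((1 / (n : ℝ)) * ∑ i, f i (b i)) ^ 2 / t ^ 2 := by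
    intro b
    set D := (1 / (n : ℝ)) * ∑ i, f i (b i) with hD
    split
    · rename_i h
      have h2 : t ^ 2 < D ^ 2 := by
        have := sq_lt_sq' (by linarith [abs_nonneg D, neg_abs_le D] : -|D| < t) h
        calc t ^ 2 < |D| ^ 2 := by nlinarith [abs_nonneg D]
          _ = D ^ 2 := sq_abs D
      rw [le_div_iff₀ (by positivity)]
      nlinarith [hq b, sq_nonneg t]
    · exact div_nonneg (mul_nonneg (hq b) (sq_nonneg D)) (sq_nonneg t)
  calc ∑ b : Fin n → B, (if t < |(1 / (n : ℝ)) * ∑ i, f i (b i)| then ∏ i, w i (b i) else 0)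
      ≤ ∑ b : Fin n → B, (∏ i, w i (b i)) * ((1 / (n : ℝ)) * ∑ i, f i (b i)) ^ 2 / t ^ 2 :=
        Finset.sum_le_sum fun b _ => step b
    _ = (1 / (n ^ 2 * t ^ 2)) * ∑ b : Fin n → B, (∏ i, w i (b i)) * (∑ i, f i (b i)) ^ 2 := by
        rw [Finset.mul_sum]
        refine Finset.sum_congr rfl fun b _ => ?_
        rw [mul_pow]
        field_simp
    _ ≤ (1 / (n ^ 2 * t ^ 2)) * n := by
        refine mul_le_mul_of_nonneg_left (second_moment w hw0 hw1 f hmean hbd) ?_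
        positivity
    _ = 1 / (n * t ^ 2) := by
        field_simp


lemma W_le_one (W : A → B → ℝ) (hWpos : ∀ a b, 0 ≤ W a b) (hWsum : ∀ a, ∑ b, W a b = 1)
    (x : A) (y : B) : W x y ≤ 1 := by
  have h := Finset.single_le_sum (f := W x) (fun b _ => hWpos x b) (Finset.mem_univ y)
  rw [hWsum x] at h
  exact h

lemma pair_cheb {n : ℕ} (hn : 1 ≤ n) (W : A → B → ℝ) (hWpos : ∀ a b, 0 ≤ W a b)
    (hWsum : ∀ a, ∑ b, W a b = 1) (a : Fin n → A) (x : A) (y : B) (t : ℝ) (ht : 0 < t) :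
    ∑ b : Fin n → B, (if t < |jointTypeOf a b (x, y) - typeOf a x * W x y|
      then ∏ i, W (a i) (b i) else 0) ≤ 1 / (n * t ^ 2) := by
  set f : Fin n → B → ℝ := fun i y' =>
    (if a i = x then 1 else 0) * ((if y' = y then 1 else 0) - W x y) with hf
  have hdiff : ∀ b : Fin n → B,
      jointTypeOf a b (x, y) - typeOf a x * W x y = (1 / (n : ℝ)) * ∑ i, f i (b i) := by
    intro b
    have hs : (∑ i, if (a i, b i) = (x, y) then (1 : ℝ) else 0) -
        (∑ i, if a i = x then (1 : ℝ) else 0) * W x y = ∑ i, f i (b i) := by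
      rw [Finset.sum_mul, ← Finset.sum_sub_distrib]
      refine Finset.sum_congr rfl fun i _ => ?_
      by_cases h1 : a i = x <;> by_cases h2 : b i = y <;>
        simp [hf, h1, h2, Prod.ext_iff]
    rw [jointTypeOf, typeOf, mul_assoc, ← mul_sub, hs]
  have hmean : ∀ i, ∑ y', W (a i) y' * f i y' = 0 := by
    intro i
    by_cases h : a i = x
    · rw [h]
      have : ∀ y', W x y' * f i y' = (if y' = y then W x y' else 0) - W x y' * W x y := by
        intro y'
        by_cases hy : y' = y <;> simp [hf, h, hy] <;> ring
      rw [Finset.sum_congr rfl fun y' _ => this y', Finset.sum_sub_distrib]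
      rw [Finset.sum_ite_eq' univ y (W x), ← Finset.sum_mul, hWsum x]
      simp
    · have : ∀ y', W (a i) y' * f i y' = 0 := by
        intro y'; simp [hf, h]
      rw [Finset.sum_congr rfl fun y' _ => this y']
      simp
  have hbd : ∀ i y', |f i y'| ≤ 1 := by
    intro i y'
    have h1 : 0 ≤ W x y := hWpos x y
    have h2 : W x y ≤ 1 := W_le_one W hWpos hWsum x y
    by_cases ha : a i = x <;> by_cases hy : y' = y <;>
      simp [hf, ha, hy, abs_le] <;> constructor <;> linarith
  calc ∑ b : Fin n → B, (if t < |jointTypeOf a b (x, y) - typeOf a x * W x y|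
        then ∏ i, W (a i) (b i) else 0)
      = ∑ b : Fin n → B, (if t < |(1 / (n : ℝ)) * ∑ i, f i (b i)|
        then ∏ i, W (a i) (b i) else 0) := by
        refine Finset.sum_congr rfl fun b _ => ?_
        rw [hdiff b]
    _ ≤ 1 / (n * t ^ 2) :=
        cheb hn (fun i => W (a i)) (fun i y' => hWpos _ _) (fun i => hWsum _) f hmean hbd t ht

lemma union_bound {n : ℕ} (hn : 1 ≤ n) [Nonempty A] [Nonempty B]
    (W : A → B → ℝ) (hWpos : ∀ a b, 0 ≤ W a b) (hWsum : ∀ a, ∑ b, W a b = 1)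
    (a : Fin n → A) (δ : ℝ) (hδ : 0 < δ) :
    ∑ b : Fin n → B, (if δ < Vd (jointTypeOf a b) (fun x : A × B => typeOf a x.1 * W x.1 x.2)
      then ∏ i, W (a i) (b i) else 0)
      ≤ (Fintype.card (A × B) : ℝ) ^ 3 / (n * δ ^ 2) := by
  set K : ℝ := (Fintype.card (A × B) : ℝ) with hK
  have hn0 : (0 : ℝ) < n := by exact_mod_cast hn
  have hK0 : (0 : ℝ) < K := by rw [hK]; exact_mod_cast Fintype.card_pos
  have ht : 0 < δ / K := div_pos hδ hK0
  have hq : ∀ b : Fin n → B, 0 ≤ ∏ i, W (a i) (b i) := fun b =>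
    Finset.prod_nonneg fun i _ => hWpos _ _
  have pointwise : ∀ b : Fin n → B,
      (if δ < Vd (jointTypeOf a b) (fun x : A × B => typeOf a x.1 * W x.1 x.2)
        then ∏ i, W (a i) (b i) else 0)
      ≤ ∑ p : A × B, (if δ / K < |jointTypeOf a b p - typeOf a p.1 * W p.1 p.2|
          then ∏ i, W (a i) (b i) else 0) := by
    intro b
    have hterm : ∀ p : A × B, (0 : ℝ) ≤ if δ / K < |jointTypeOf a b p - typeOf a p.1 * W p.1 p.2|
        then ∏ i, W (a i) (b i) else 0 := by
      intro p; split
      · exact hq b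
      · exact le_rfl
    split
    · rename_i h
      have hex : ∃ p : A × B, δ / K < |jointTypeOf a b p - typeOf a p.1 * W p.1 p.2| := by
        by_contra hcon
        push_neg at hcon
        have hle : Vd (jointTypeOf a b) (fun x : A × B => typeOf a x.1 * W x.1 x.2) ≤ δ := by
          calc Vd (jointTypeOf a b) (fun x : A × B => typeOf a x.1 * W x.1 x.2)
              = ∑ p : A × B, |jointTypeOf a b p - typeOf a p.1 * W p.1 p.2| := rfl
            _ ≤ ∑ _p : A × B, δ / K := Finset.sum_le_sum fun p _ => hcon p
            _ = K * (δ / K) := by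
                rw [Finset.sum_const, Finset.card_univ, nsmul_eq_mul, hK]
            _ = δ := by field_simp
        linarith
      obtain ⟨p, hp⟩ := hex
      calc ∏ i, W (a i) (b i)
          = (if δ / K < |jointTypeOf a b p - typeOf a p.1 * W p.1 p.2|
            then ∏ i, W (a i) (b i) else 0) := (if_pos hp).symm
        _ ≤ ∑ p : A × B, (if δ / K < |jointTypeOf a b p - typeOf a p.1 * W p.1 p.2|
            then ∏ i, W (a i) (b i) else 0) :=
            Finset.single_le_sum (fun p _ => hterm p) (Finset.mem_univ p)
    · exact Finset.sum_nonneg fun p _ => hterm p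
  calc ∑ b : Fin n → B, (if δ < Vd (jointTypeOf a b) (fun x : A × B => typeOf a x.1 * W x.1 x.2)
        then ∏ i, W (a i) (b i) else 0)
      ≤ ∑ b : Fin n → B, ∑ p : A × B,
          (if δ / K < |jointTypeOf a b p - typeOf a p.1 * W p.1 p.2|
          then ∏ i, W (a i) (b i) else 0) := Finset.sum_le_sum fun b _ => pointwise b
    _ = ∑ p : A × B, ∑ b : Fin n → B,
          (if δ / K < |jointTypeOf a b p - typeOf a p.1 * W p.1 p.2|
          then ∏ i, W (a i) (b i) else 0) := Finset.sum_comm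
    _ ≤ ∑ _p : A × B, 1 / (n * (δ / K) ^ 2) := by
        refine Finset.sum_le_sum fun p _ => ?_
        have := pair_cheb hn W hWpos hWsum a p.1 p.2 (δ / K) ht
        simpa using this
    _ = K * (1 / (n * (δ / K) ^ 2)) := by
        rw [Finset.sum_const, Finset.card_univ, nsmul_eq_mul, hK]
    _ = K ^ 3 / (n * δ ^ 2) := by
        field_simp


lemma Vd_channel {n : ℕ} (PA : A → ℝ) (W : A → B → ℝ) (hWpos : ∀ a b, 0 ≤ W a b)
    (hWsum : ∀ a, ∑ b, W a b = 1) (a : Fin n → A) :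
    Vd (fun x : A × B => typeOf a x.1 * W x.1 x.2) (fun x : A × B => PA x.1 * W x.1 x.2)
      = Vd (typeOf a) PA := by
  rw [Vd, Vd, Fintype.sum_prod_type]
  refine Finset.sum_congr rfl fun x _ => ?_
  have h : ∀ y, |typeOf a x * W x y - PA x * W x y| = |typeOf a x - PA x| * W x y := by
    intro y
    rw [← sub_mul, abs_mul, abs_of_nonneg (hWpos x y)]
  rw [Finset.sum_congr rfl fun y _ => h y, ← Finset.mul_sum, hWsum x, mul_one]

lemma Vd_triangle {X : Type*} [Fintype X] (P Q R : X → ℝ) : Vd P R ≤ Vd P Q + Vd Q R := by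
  rw [Vd, Vd, Vd, ← Finset.sum_add_distrib]
  exact Finset.sum_le_sum fun x _ => abs_sub_le _ _ _

lemma sum_prod_W_eq_one {n : ℕ} (W : A → B → ℝ) (hWsum : ∀ a, ∑ b, W a b = 1)
    (a : Fin n → A) : ∑ b : Fin n → B, ∏ i, W (a i) (b i) = 1 := by
  rw [sum_prod_eq (fun i y => W (a i) y)]
  simp [hWsum]

/-- Adding a coordinate generated through a memoryless channel `W` preserves
empirical coordination. -/
theorem add_memoryless_coordinate (PA : A → ℝ) (W : A → B → ℝ)
    (hPApos : ∀ a, 0 ≤ PA a) (hPAsum : ∑ a, PA a = 1)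
    (hWpos : ∀ a b, 0 ≤ W a b) (hWsum : ∀ a, ∑ b, W a b = 1)
    (μ : (n : ℕ) → (Fin n → A) → ℝ)
    (hμpos : ∀ n w, 0 ≤ μ n w) (hμsum : ∀ n, ∑ w : Fin n → A, μ n w = 1)
    (ε : ℝ) (hε : 0 ≤ ε)
    (hcoord : Tendsto (fun n : ℕ =>
        ∑ w : Fin n → A, if ε < Vd (typeOf w) PA then μ n w else 0) atTop (𝓝 0)) :
    ∀ ε' > ε, Tendsto (fun n : ℕ =>
        ∑ a : Fin n → A, ∑ b : Fin n → B,
          if ε' < Vd (jointTypeOf a b) (fun x : A × B => PA x.1 * W x.1 x.2) then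
            μ n a * ∏ i, W (a i) (b i)
          else 0) atTop (𝓝 0) := by
  intro ε' hε'
  set δ : ℝ := ε' - ε with hδdef
  have hδ : 0 < δ := by rw [hδdef]; linarith
  rcases isEmpty_or_nonempty A with hA | hA
  · refine Tendsto.congr' ?_ tendsto_const_nhds
    filter_upwards [eventually_ge_atTop 1] with n hn
    haveI : IsEmpty (Fin n → A) := ⟨fun g => hA.elim (g ⟨0, by omega⟩)⟩
    simp
  rcases isEmpty_or_nonempty B with hB | hB
  · refine Tendsto.congr' ?_ tendsto_const_nhds
    filter_upwards [eventually_ge_atTop 1] with n hn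
    haveI : IsEmpty (Fin n → B) := ⟨fun g => hB.elim (g ⟨0, by omega⟩)⟩
    simp
  set K : ℝ := (Fintype.card (A × B) : ℝ) with hK
  have hK0 : (0 : ℝ) < K := by rw [hK]; exact_mod_cast Fintype.card_pos
  have htail : Tendsto (fun n : ℕ => K ^ 3 / (n * δ ^ 2)) atTop (𝓝 0) := by
    have h1 : Tendsto (fun n : ℕ => (K ^ 3 / δ ^ 2) * (1 / (n : ℝ))) atTop
        (𝓝 ((K ^ 3 / δ ^ 2) * 0)) :=
      tendsto_const_nhds.mul tendsto_one_div_atTop_nhds_zero_nat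
    rw [mul_zero] at h1
    refine h1.congr fun n => ?_
    rw [div_mul_eq_mul_div, mul_one_div, div_div]
  have hglim : Tendsto (fun n : ℕ =>
      (∑ w : Fin n → A, if ε < Vd (typeOf w) PA then μ n w else 0)
        + K ^ 3 / (n * δ ^ 2)) atTop (𝓝 0) := by
    simpa using hcoord.add htail
  refine squeeze_zero' ?_ ?_ hglim
  · filter_upwards with n
    refine Finset.sum_nonneg fun a _ => Finset.sum_nonneg fun b _ => ?_
    split
    · exact mul_nonneg (hμpos n a) (Finset.prod_nonneg fun i _ => hWpos _ _)
    · exact le_rfl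
  · filter_upwards [eventually_ge_atTop 1] with n hn
    have hq : ∀ (a : Fin n → A) (b : Fin n → B), 0 ≤ ∏ i, W (a i) (b i) := fun a b =>
      Finset.prod_nonneg fun i _ => hWpos _ _
    have hpt : ∀ (a : Fin n → A) (b : Fin n → B),
        (if ε' < Vd (jointTypeOf a b) (fun x : A × B => PA x.1 * W x.1 x.2) then
          μ n a * ∏ i, W (a i) (b i) else 0)
        ≤ (if ε < Vd (typeOf a) PA then μ n a * ∏ i, W (a i) (b i) else 0)
          + (if δ < Vd (jointTypeOf a b) (fun x : A × B => typeOf a x.1 * W x.1 x.2) then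
              μ n a * ∏ i, W (a i) (b i) else 0) := by
      intro a b
      have hm : 0 ≤ μ n a * ∏ i, W (a i) (b i) := mul_nonneg (hμpos n a) (hq a b)
      have h1 : (0 : ℝ) ≤ if ε < Vd (typeOf a) PA then μ n a * ∏ i, W (a i) (b i) else 0 := by
        split
        · exact hm
        · exact le_rfl
      have h2 : (0 : ℝ) ≤ if δ < Vd (jointTypeOf a b)
          (fun x : A × B => typeOf a x.1 * W x.1 x.2) then
          μ n a * ∏ i, W (a i) (b i) else 0 := by
        split
        · exact hm
        · exact le_rfl
      split
      · rename_i hc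
        by_cases hta : ε < Vd (typeOf a) PA
        · rw [if_pos hta]
          linarith
        · push_neg at hta
          have htri := Vd_triangle (jointTypeOf a b)
            (fun x : A × B => typeOf a x.1 * W x.1 x.2)
            (fun x : A × B => PA x.1 * W x.1 x.2)
          rw [Vd_channel PA W hWpos hWsum a] at htri
          have hgt : δ < Vd (jointTypeOf a b)
              (fun x : A × B => typeOf a x.1 * W x.1 x.2) := by
            rw [hδdef]; linarith
          rw [if_pos hgt]
          linarith
      · linarith
    calc ∑ a : Fin n → A, ∑ b : Fin n → B,
          (if ε' < Vd (jointTypeOf a b) (fun x : A × B => PA x.1 * W x.1 x.2) then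
            μ n a * ∏ i, W (a i) (b i) else 0)
        ≤ ∑ a : Fin n → A, ∑ b : Fin n → B,
            ((if ε < Vd (typeOf a) PA then μ n a * ∏ i, W (a i) (b i) else 0)
            + (if δ < Vd (jointTypeOf a b) (fun x : A × B => typeOf a x.1 * W x.1 x.2) then
                μ n a * ∏ i, W (a i) (b i) else 0)) :=
          Finset.sum_le_sum fun a _ => Finset.sum_le_sum fun b _ => hpt a b
      _ = (∑ a : Fin n → A, ∑ b : Fin n → B,
            (if ε < Vd (typeOf a) PA then μ n a * ∏ i, W (a i) (b i) else 0))
          + ∑ a : Fin n → A, ∑ b : Fin n → B,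
            (if δ < Vd (jointTypeOf a b) (fun x : A × B => typeOf a x.1 * W x.1 x.2) then
              μ n a * ∏ i, W (a i) (b i) else 0) := by
          rw [← Finset.sum_add_distrib]
          exact Finset.sum_congr rfl fun a _ => Finset.sum_add_distrib
      _ ≤ (∑ w : Fin n → A, if ε < Vd (typeOf w) PA then μ n w else 0)
          + K ^ 3 / (n * δ ^ 2) := by
          refine add_le_add (le_of_eq ?_) ?_
          · refine Finset.sum_congr rfl fun a _ => ?_
            by_cases hc : ε < Vd (typeOf a) PA
            · simp only [if_pos hc]
              rw [← Finset.mul_sum, sum_prod_W_eq_one W hWsum a, mul_one]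
            · simp [hc]
          · calc ∑ a : Fin n → A, ∑ b : Fin n → B,
                  (if δ < Vd (jointTypeOf a b) (fun x : A × B => typeOf a x.1 * W x.1 x.2) then
                    μ n a * ∏ i, W (a i) (b i) else 0)
                = ∑ a : Fin n → A, μ n a * ∑ b : Fin n → B,
                    (if δ < Vd (jointTypeOf a b) (fun x : A × B => typeOf a x.1 * W x.1 x.2) then
                      ∏ i, W (a i) (b i) else 0) := by
                  refine Finset.sum_congr rfl fun a _ => ?_
                  rw [Finset.mul_sum]
                  exact Finset.sum_congr rfl fun b _ => by rw [mul_ite, mul_zero]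
              _ ≤ ∑ a : Fin n → A, μ n a * (K ^ 3 / (n * δ ^ 2)) := by
                  refine Finset.sum_le_sum fun a _ => ?_
                  refine mul_le_mul_of_nonneg_left ?_ (hμpos n a)
                  rw [hK]
                  exact union_bound hn W hWpos hWsum a δ hδ
              _ = K ^ 3 / (n * δ ^ 2) := by rw [← Finset.sum_mul, hμsum n, one_mul]


end Stmt12
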